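/- arXiv:0801.2070 — 2 statements merged into one kernel-verified Lean document; each statement's English description precedes it below -/
import Mathlib

section
/- Let K : ℝ^d → ℝ be bounded and continuous at each point, with ∫ K² < ∞ interpreted via K bounded integrable, and let f : ℝ^d → ℝ be a bounded probability density continuous at θ. Then for a sequence h_k → 0 of positive reals, h_k^{-d} E[K((θ - X)/h_k)²] → f(θ) ∫_{ℝ^d} K(z)² dz as k → ∞, where X has density f. -/
open MeasureTheory Filter

theorem stmt_8 (d : ℕ)
    (K f : EuclideanSpace ℝ (Fin d) → ℝ)
    (hK_bdd : ∃ C, ∀ z, |K z| ≤ C) (hK_cont : Continuous K)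
    (hK_int : Integrable K (volume : Measure (EuclideanSpace ℝ (Fin d))))
    (hf_bdd : ∃ C, ∀ x, |f x| ≤ C) (hf_nonneg : ∀ x, 0 ≤ f x)
    (hf_int : ∫ x, f x = 1)
    (θ : EuclideanSpace ℝ (Fin d)) (hf_contθ : ContinuousAt f θ)
    (h : ℕ → ℝ) (hh_pos : ∀ k, 0 < h k) (hh_lim : Tendsto h atTop (nhds 0)) :
    Tendsto (fun k => ((h k) ^ d)⁻¹ * ∫ y, K ((h k)⁻¹ • (θ - y)) ^ 2 * f y)
      atTop (nhds (f θ * ∫ z, K z ^ 2)) := by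
  obtain ⟨Cf, hCf⟩ := hf_bdd
  -- f is integrable (otherwise ∫ f = 0 ≠ 1)
  have hf_integrable : Integrable f (volume : Measure (EuclideanSpace ℝ (Fin d))) := by
    by_contra hcon
    rw [integral_undef hcon] at hf_int
    exact one_ne_zero hf_int.symm
  have hfm : AEStronglyMeasurable f (volume : Measure (EuclideanSpace ℝ (Fin d))) :=
    hf_integrable.aestronglyMeasurable
  have hd : Module.finrank ℝ (EuclideanSpace ℝ (Fin d)) = d := by
    simp [finrank_euclideanSpace]
  -- K² is integrable
  have hK2_int : Integrable (fun z => K z ^ 2)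
      (volume : Measure (EuclideanSpace ℝ (Fin d))) := by
    have := hK_int.bdd_mul (c := hK_bdd.choose) hK_cont.aestronglyMeasurable
      (Filter.Eventually.of_forall fun z => by simpa using hK_bdd.choose_spec z)
    simpa [Pi.mul_def, sq] using this
  -- change of variables: the rescaled integral equals ∫ K z ^ 2 * f (θ - h k • z)
  have key : ∀ k, ((h k) ^ d)⁻¹ * ∫ y, K ((h k)⁻¹ • (θ - y)) ^ 2 * f y
      = ∫ z, K z ^ 2 * f (θ - h k • z) := by
    intro k
    have hkpos := hh_pos k
    have hk0 : h k ≠ 0 := (hh_pos k).ne'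
    have e1 : ∫ z, K z ^ 2 * f (θ - h k • z)
        = ∫ z, (fun y => K ((h k)⁻¹ • y) ^ 2 * f (θ - y)) (h k • z) := by
      congr 1; ext z
      simp [inv_smul_smul₀ hk0]
    rw [e1, MeasureTheory.Measure.integral_comp_smul
      (volume : Measure (EuclideanSpace ℝ (Fin d)))
      (fun y => K ((h k)⁻¹ • y) ^ 2 * f (θ - y)) (h k)]
    have e2 : ∫ y, K ((h k)⁻¹ • y) ^ 2 * f (θ - y)
        = ∫ y, K ((h k)⁻¹ • (θ - y)) ^ 2 * f y := by
      rw [← integral_sub_left_eq_self (fun y => K ((h k)⁻¹ • (θ - y)) ^ 2 * f y)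
        (volume : Measure (EuclideanSpace ℝ (Fin d))) θ]
      simp
    rw [e2, hd, smul_eq_mul, abs_of_nonneg (by positivity)]
  simp_rw [key]
  -- the target value is ∫ K z ^ 2 * f θ
  have target : f θ * ∫ z, K z ^ 2 = ∫ z, K z ^ 2 * f θ := by
    rw [← integral_const_mul, integral_congr_ae]
    filter_upwards with z using by ring
  rw [target]
  -- dominated convergence
  apply tendsto_integral_of_dominated_convergence (fun z => Cf * K z ^ 2)
  · intro k
    have hkpos := hh_pos k
    have hk0 : h k ≠ 0 := (hh_pos k).ne'
    have hT : Measure.QuasiMeasurePreserving (fun z : EuclideanSpace ℝ (Fin d) => θ - h k • z)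
        volume volume := by
      have h1 : Measure.QuasiMeasurePreserving
          (fun z : EuclideanSpace ℝ (Fin d) => h k • z) volume volume := by
        refine ⟨(measurable_const_smul (h k)), ?_⟩
        rw [show ((fun z : EuclideanSpace ℝ (Fin d) => h k • z)) = (h k • ·) from rfl,
          Measure.map_addHaar_smul volume hk0]
        exact Measure.absolutelyContinuous_of_le_smul le_rfl
      have h2 : Measure.QuasiMeasurePreserving
          (fun y : EuclideanSpace ℝ (Fin d) => θ - y) volume volume :=
        (Measure.measurePreserving_sub_left volume θ).quasiMeasurePreserving
      exact h2.comp h1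
    exact ((hK_cont.pow 2).aestronglyMeasurable.mul
      (hfm.comp_quasiMeasurePreserving hT))
  · exact hK2_int.const_mul Cf
  · intro k
    filter_upwards with z
    have : |f (θ - h k • z)| ≤ Cf := hCf _
    calc ‖K z ^ 2 * f (θ - h k • z)‖ = K z ^ 2 * |f (θ - h k • z)| := by
          rw [norm_mul]; simp [abs_of_nonneg (sq_nonneg (K z))]
      _ ≤ K z ^ 2 * Cf := by
          exact mul_le_mul_of_nonneg_left this (sq_nonneg _)
      _ = Cf * K z ^ 2 := by ring
  · filter_upwards with z
    have h1 : Tendsto (fun k => θ - h k • z) atTop (nhds θ) := by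
      have : Tendsto (fun k => h k • z) atTop (nhds ((0 : ℝ) • z)) :=
        hh_lim.smul tendsto_const_nhds
      simpa using tendsto_const_nhds.sub this
    have h2 : Tendsto (fun k => f (θ - h k • z)) atTop (nhds (f θ)) :=
      hf_contθ.tendsto.comp h1
    simpa using tendsto_const_nhds.mul h2
end

section
/- Let (X_n) be a sequence of random vectors in ℝ^{d+1} and 𝓔 = {ν : ν^T Σ^{-1} ν ≤ 1} with Σ positive definite. Suppose that almost surely: (i) limsup_n ‖Σ^{-1/2} X_n‖₂ ≤ 1, and (ii) for every unit vector w ∈ ℝ^{d+1}, limsup_n w^T Σ^{-1/2} X_n ≥ 1. Then almost surely every point of the unit sphere S^d ⊂ ℝ^{d+1} is a limit point of the sequence (Σ^{-1/2} X_n). -/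
open MeasureTheory Filter

private lemma norm_le_sum_abs {d : ℕ} (x : EuclideanSpace ℝ (Fin (d + 1))) :
    ‖x‖ ≤ ∑ i, |x i| := by
  rw [EuclideanSpace.norm_eq]
  have h1 : ∑ i, ‖x i‖ ^ 2 ≤ (∑ i, |x i|) ^ 2 := by
    simpa [Real.norm_eq_abs] using
      Finset.sum_sq_le_sq_sum_of_nonneg (s := Finset.univ)
        (f := fun i => |x i|) (fun i _ => abs_nonneg _)
  calc Real.sqrt (∑ i, ‖x i‖ ^ 2) ≤ Real.sqrt ((∑ i, |x i|) ^ 2) := Real.sqrt_le_sqrt h1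
    _ = ∑ i, |x i| := Real.sqrt_sq (Finset.sum_nonneg fun i _ => abs_nonneg _)

private lemma limsup_of_unbounded (g : ℕ → ℝ)
    (hg : ¬ IsBoundedUnder (· ≤ ·) atTop g) : limsup g atTop = 0 := by
  have : {a : ℝ | ∀ᶠ n in atTop, g n ≤ a} = ∅ := by
    ext a
    simp only [Set.mem_setOf_eq, Set.mem_empty_iff_false, iff_false]
    exact fun ha => hg ⟨a, eventually_map.2 ha⟩
  rw [limsup_eq, this, Real.sInf_empty]

private lemma key {d : ℕ} (Y : ℕ → EuclideanSpace ℝ (Fin (d + 1)))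
    (h1 : limsup (fun n => ‖Y n‖) atTop ≤ 1)
    (h2 : ∀ i : Fin (d + 1), 1 ≤ limsup (fun n => Y n i) atTop)
    (h3 : ∀ i : Fin (d + 1), 1 ≤ limsup (fun n => -(Y n i)) atTop)
    (D : Set (EuclideanSpace ℝ (Fin (d + 1)))) (hD : Dense D)
    (h4 : ∀ v ∈ D, v ≠ 0 →
      1 ≤ limsup (fun n => (inner ℝ ((‖v‖⁻¹ : ℝ) • v) (Y n) : ℝ)) atTop)
    (w : EuclideanSpace ℝ (Fin (d + 1))) (hw : ‖w‖ = 1) :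
    MapClusterPt w atTop Y := by
  -- Step 1: the sequence of norms is bounded above.
  have hbd : IsBoundedUnder (· ≤ ·) atTop (fun n => ‖Y n‖) := by
    by_contra hub
    have hcoord : ∃ i, ¬ IsBoundedUnder (· ≤ ·) atTop (fun n => |Y n i|) := by
      by_contra hc
      push_neg at hc
      apply hub
      have hc' : ∀ i, ∃ b : ℝ, ∀ᶠ n in atTop, |Y n i| ≤ b := fun i => by
        obtain ⟨b, hb⟩ := hc i
        exact ⟨b, eventually_map.1 hb⟩
      choose b hb using hc'
      refine ⟨∑ i, b i, eventually_map.2 ?_⟩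
      have hall : ∀ᶠ n in atTop, ∀ i, |Y n i| ≤ b i := eventually_all.2 hb
      filter_upwards [hall] with n hn
      calc ‖Y n‖ ≤ ∑ i, |Y n i| := norm_le_sum_abs _
        _ ≤ ∑ i, b i := Finset.sum_le_sum fun i _ => hn i
    obtain ⟨i, hi⟩ := hcoord
    have hsplit : ¬ IsBoundedUnder (· ≤ ·) atTop (fun n => Y n i) ∨
        ¬ IsBoundedUnder (· ≤ ·) atTop (fun n => -(Y n i)) := by
      by_contra h
      push_neg at h
      obtain ⟨⟨b1, hb1⟩, ⟨b2, hb2⟩⟩ := h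
      rw [eventually_map] at hb1 hb2
      apply hi
      refine ⟨max b1 b2, eventually_map.2 ?_⟩
      filter_upwards [hb1, hb2] with n hn1 hn2
      rw [abs_le]
      constructor
      · have : -(Y n i) ≤ max b1 b2 := le_trans hn2 (le_max_right _ _)
        linarith
      · exact le_trans hn1 (le_max_left _ _)
    rcases hsplit with hpos | hneg
    · have := h2 i
      rw [limsup_of_unbounded _ hpos] at this
      linarith
    · have := h3 i
      rw [limsup_of_unbounded _ hneg] at this
      linarith
  -- Step 2: cluster point argument.
  rw [mapClusterPt_iff_frequently]
  intro s hs
  obtain ⟨δ, δpos, hδ⟩ := Metric.mem_nhds_iff.1 hs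
  set ε : ℝ := min 1 (δ ^ 2 / 10) with hεdef
  have hε0 : 0 < ε := lt_min one_pos (by positivity)
  have hε1 : ε ≤ 1 := min_le_left _ _
  have hε2 : ε ≤ δ ^ 2 / 10 := min_le_right _ _
  -- pick a nearby point of the dense set and normalize it
  obtain ⟨v, hvD, hvw⟩ := hD.exists_dist_lt w (show (0:ℝ) < ε / 2 by positivity)
  have hwv : ‖w - v‖ < ε / 2 := by rwa [← dist_eq_norm]
  have hv0 : v ≠ 0 := by
    intro h
    rw [h, sub_zero, hw] at hwv
    linarith
  have hvpos : (0:ℝ) < ‖v‖ := norm_pos_iff.2 hv0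
  set w' : EuclideanSpace ℝ (Fin (d + 1)) := (‖v‖⁻¹ : ℝ) • v with hw'def
  have hw'1 : ‖w'‖ = 1 := norm_smul_inv_norm hv0
  have hww' : ‖w' - w‖ < ε := by
    have e1 : ‖w' - v‖ = |1 - ‖v‖| := by
      have : w' - v = ((‖v‖⁻¹ : ℝ) - 1) • v := by rw [sub_smul, one_smul]
      rw [this, norm_smul, Real.norm_eq_abs]
      rw [show |‖v‖⁻¹ - 1| * ‖v‖ = |(‖v‖⁻¹ - 1) * ‖v‖| by
        rw [abs_mul, abs_of_pos hvpos]]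
      congr 1
      field_simp
    have e2 : |1 - ‖v‖| ≤ ‖w - v‖ := by
      have := abs_norm_sub_norm_le (w) (v)
      rwa [hw] at this
    calc ‖w' - w‖ ≤ ‖w' - v‖ + ‖v - w‖ := norm_sub_le_norm_sub_add_norm_sub _ _ _
      _ = ‖w' - v‖ + ‖w - v‖ := by rw [norm_sub_rev v w]
      _ ≤ ‖w - v‖ + ‖w - v‖ := by rw [e1]; linarith [e2]
      _ < ε / 2 + ε / 2 := by linarith
      _ = ε := by ring
  have hlim' : 1 ≤ limsup (fun n => (inner ℝ w' (Y n) : ℝ)) atTop := h4 v hvD hv0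
  obtain ⟨B, hB⟩ := id hbd
  rw [eventually_map] at hB
  have hcob : IsCoboundedUnder (· ≤ ·) atTop (fun n => (inner ℝ w' (Y n) : ℝ)) := by
    apply isCoboundedUnder_le_of_eventually_le atTop (x := -B)
    filter_upwards [hB] with n hn
    have habs : |(inner ℝ w' (Y n) : ℝ)| ≤ ‖w'‖ * ‖Y n‖ := abs_real_inner_le_norm _ _
    rw [hw'1, one_mul] at habs
    have := neg_abs_le (inner ℝ w' (Y n) : ℝ)
    linarith
  have hfreq : ∃ᶠ n in atTop, 1 - ε < (inner ℝ w' (Y n) : ℝ) :=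
    frequently_lt_of_lt_limsup hcob (by linarith)
  have hev : ∀ᶠ n in atTop, ‖Y n‖ < 1 + ε :=
    eventually_lt_of_limsup_lt (by linarith) hbd
  refine (hfreq.and_eventually hev).mono ?_
  rintro n ⟨hn1, hn2⟩
  apply hδ
  rw [Metric.mem_ball, dist_eq_norm]
  have e1 : (inner ℝ (w' - w) (Y n) : ℝ) ≤ ‖w' - w‖ * ‖Y n‖ := real_inner_le_norm _ _
  rw [inner_sub_left] at e1
  have e2 : ‖Y n - w‖ ^ 2 = ‖Y n‖ ^ 2 - 2 * (inner ℝ (Y n) w : ℝ) + ‖w‖ ^ 2 :=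
    norm_sub_sq_real _ _
  have e3 : (inner ℝ (Y n) w : ℝ) = inner ℝ w (Y n) := real_inner_comm _ _
  have e4 : ‖w' - w‖ * ‖Y n‖ ≤ ε * (1 + ε) :=
    mul_le_mul hww'.le hn2.le (norm_nonneg _) (by linarith)
  have hsq : ‖Y n - w‖ ^ 2 < δ ^ 2 := by
    rw [e2, e3, hw]
    nlinarith [hn1, hn2, e1, e4, hε1, hε2, hε0, δpos, norm_nonneg (Y n),
      pow_pos δpos 2]
  exact lt_of_pow_lt_pow_left₀ 2 δpos.le hsq

section

open scoped ComplexOrder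

/-- The square root of a positive semidefinite matrix, with its definition from the older Mathlib
(removed since). -/
noncomputable def Matrix.PosSemidef.sqrt {n 𝕜 : Type*} [Fintype n] [DecidableEq n] [RCLike 𝕜]
    {A : Matrix n n 𝕜} (hA : A.PosSemidef) : Matrix n n 𝕜 :=
  hA.isHermitian.eigenvectorUnitary.1 * Matrix.diagonal ((↑) ∘ (√·) ∘ hA.isHermitian.eigenvalues) *
    (star hA.isHermitian.eigenvectorUnitary : Matrix n n 𝕜)

end

set_option synthInstance.maxHeartbeats 1000000 in
theorem stmt_11 (d : ℕ) (Ω : Type*) [MeasureSpace Ω]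
    [IsProbabilityMeasure (volume : Measure Ω)]
    (X : ℕ → Ω → EuclideanSpace ℝ (Fin (d + 1)))
    (S : Matrix (Fin (d + 1)) (Fin (d + 1)) ℝ) (hS : S.PosDef)
    -- R is the inverse square root Σ^{-1/2} of Σ = S
    (R : Matrix (Fin (d + 1)) (Fin (d + 1)) ℝ)
    (hR : R = (Matrix.PosSemidef.sqrt hS.posSemidef)⁻¹)
    (h_bound : ∀ᵐ ω, limsup (fun n => ‖Matrix.toEuclideanLin R (X n ω)‖) atTop ≤ 1)
    (h_dir : ∀ w : EuclideanSpace ℝ (Fin (d + 1)), ‖w‖ = 1 →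
      ∀ᵐ ω, 1 ≤ limsup (fun n => (inner ℝ w (Matrix.toEuclideanLin R (X n ω)) : ℝ)) atTop) :
    ∀ᵐ ω, ∀ w : EuclideanSpace ℝ (Fin (d + 1)), ‖w‖ = 1 →
      MapClusterPt w atTop (fun n => Matrix.toEuclideanLin R (X n ω)) := by
  set Z : ℕ → Ω → EuclideanSpace ℝ (Fin (d + 1)) :=
    fun n ω => Matrix.toEuclideanLin R (X n ω) with hZ
  obtain ⟨D, hDc, hDd⟩ :=
    TopologicalSpace.exists_countable_dense (EuclideanSpace ℝ (Fin (d + 1)))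
  have h2 : ∀ᵐ ω, ∀ i : Fin (d + 1), 1 ≤ limsup (fun n => Z n ω i) atTop := by
    rw [ae_all_iff]
    intro i
    filter_upwards [h_dir (EuclideanSpace.single i 1)
      (by simp [EuclideanSpace.norm_single])] with ω hω
    simpa [hZ, EuclideanSpace.inner_single_left] using hω
  have h3 : ∀ᵐ ω, ∀ i : Fin (d + 1), 1 ≤ limsup (fun n => -(Z n ω i)) atTop := by
    rw [ae_all_iff]
    intro i
    filter_upwards [h_dir (-(EuclideanSpace.single i 1))
      (by simp [EuclideanSpace.norm_single])] with ω hω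
    simpa [hZ, EuclideanSpace.inner_single_left, inner_neg_left] using hω
  have h4 : ∀ᵐ ω, ∀ v ∈ D, v ≠ 0 →
      1 ≤ limsup (fun n => (inner ℝ ((‖v‖⁻¹ : ℝ) • v) (Z n ω) : ℝ)) atTop := by
    rw [ae_ball_iff hDc]
    intro v hv
    by_cases hv0 : v = 0
    · filter_upwards with ω h
      exact absurd hv0 h
    · filter_upwards [h_dir ((‖v‖⁻¹ : ℝ) • v) (norm_smul_inv_norm hv0)] with ω hω
      exact fun _ => hω
  filter_upwards [h_bound, h2, h3, h4] with ω hbω h2ω h3ω h4ω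
  intro w hw
  exact key (fun n => Z n ω) hbω h2ω h3ω D hDd h4ω w hw
end
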